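/- Let A, B ⊆ {1,…,n} be distinct sets with n ∈ A ∩ B and H(λ_A) = H(λ_B). Then λ_A and λ_B are conjugate to each other if and only if A \ B and B \ A are both n-symmetric sets. -/

import Mathlib

/-- A partition: weakly decreasing list of positive integers. -/
def IsPartition (l : List ℕ) : Prop :=
  l.Pairwise (· ≥ ·) ∧ ∀ x ∈ l, 0 < x

/-- The conjugate partition: `λ'ᵢ = #{j : λⱼ ≥ i}` (0-indexed). -/
def conjugatePart (l : List ℕ) : List ℕ :=
  (List.range (l.headD 0)).map (fun i => (l.filter (fun p => decide (i + 1 ≤ p))).length)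

/-- The multiset of hook lengths of the Young diagram of `l` (rows and columns 0-indexed):
`h(i,j) = λᵢ - j + #{i' > i : λᵢ' > j}`. -/
def hooks (l : List ℕ) : Multiset ℕ :=
  ((List.range l.length).flatMap (fun i =>
    (List.range (l.getD i 0)).map (fun j =>
      l.getD i 0 - j + ((l.drop (i + 1)).filter (fun p => decide (j < p))).length)) : List ℕ)

/-- The β-set `{λᵢ + m - i : 1 ≤ i ≤ m}` (here 0-indexed: `λᵢ + (m - 1 - i)`). -/
def betaSet (l : List ℕ) : Finset ℕ :=
  ((List.range l.length).map (fun i => l.getD i 0 + (l.length - 1 - i))).toFinset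

/-- `λ_A`: the partition whose β-set is `A`. -/
def partitionOfBeta (A : Finset ℕ) : List ℕ :=
  ((A.sort (· ≤ ·)).reverse).mapIdx (fun i a => a - (A.card - 1 - i))

/-- A set `S` is `n`-symmetric if `S = {n - x : x ∈ S}`. -/
def NSymm (n : ℕ) (S : Finset ℕ) : Prop :=
  S.image (fun x => n - x) = S

/-- Sum multiset `{x + y : x ∈ M, y ∈ N}` with multiplicity. -/
def msAdd (M N : Multiset ℕ) : Multiset ℕ :=
  M.bind (fun x => N.map (fun y => x + y))

/-!
Write `A` for the β-set of `λ_A`, listed as `a₀ > a₁ > ⋯`; row `i` of `λ_A` has length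
`#{b < aᵢ | b ∉ A}`. Column `j` of that row corresponds to the `j`-th gap `b` of `A`, and its hook
length is `aᵢ - b`; so `H(λ_A)` is the multiset of differences `a - b` with `a ∈ A`, `b ∉ A`,
`b < a`. Reading the same picture by columns shows that, when `n = max A`, the conjugate partition
has β-set `A* = {x ≤ n | n - x ∉ A}`. Hence `λ_A' = λ_B` iff `B = A*`, and then `A \ B` and
`B \ A` are visibly `n`-symmetric.

For the converse put `χ_S = ∑_{s ∈ S} T^s` and let `H_S` be the generating function of the hooks,
in `ℤ[T, T⁻¹]`, with `f̄(T) = f(T⁻¹)`. Adding a largest element to `S` gives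
`(1 - T)(χ_S χ̄_S + H_S + H̄_S) = χ̄_S - T χ_S` by induction. Subtracting this identity for `A`
and `B` (equal hooks) and using `χ_A - χ_B = Tⁿ(χ̄_A - χ̄_B)` (from the symmetry of `A \ B` and
`B \ A`) leaves `(χ̄_A - χ̄_B)(1 - T)(Tⁿ χ̄_A + χ_B) = (χ̄_A - χ̄_B)(1 - Tⁿ⁺¹)`. Since `A ≠ B`
and `ℤ[T, T⁻¹]` is a domain, `Tⁿ χ̄_A + χ_B = 1 + T + ⋯ + Tⁿ`, which says exactly `B = A*`.
-/

open Finset LaurentPolynomial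

theorem Finset.reverse_sort_le {α : Type*} [LinearOrder α] (s : Finset α) :
    (s.sort (· ≤ ·)).reverse = s.sort (· ≥ ·) := by
  have h := (List.toFinset_sort (· ≥ ·) (l := (s.sort (· ≤ ·)).reverse) (by simp)).2
    (List.pairwise_reverse.2 (s.pairwise_sort (· ≤ ·)))
  simpa using h.symm

lemma card_le_of_forall_lt {s : Finset ℕ} {a : ℕ} (h : ∀ x ∈ s, x < a) : #s ≤ a := by
  simpa using card_le_card (fun x hx => mem_range.2 (h x hx) : s ⊆ range a)

lemma partitionOfBeta_insert_of_lt {s : Finset ℕ} {a : ℕ} (h : ∀ x ∈ s, x < a) :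
    partitionOfBeta (insert a s) = (a - #s) :: partitionOfBeta s := by
  have ha : a ∉ s := fun ha => (h a ha).false
  unfold partitionOfBeta
  rw [reverse_sort_le, reverse_sort_le, sort_insert _ (fun x hx => (h x hx).le) ha,
    card_insert_of_notMem ha, List.mapIdx_cons]
  congr 2
  funext i x
  congr 1
  omega

lemma count_notMem_insert_of_le {s : Finset ℕ} {a x : ℕ} (hx : x ≤ a) :
    Nat.count (· ∉ insert a s) x = Nat.count (· ∉ s) x := by
  simp only [Nat.count_eq_card_filter_range]
  congr 1
  refine filter_congr fun b hb => ?_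
  have : b ≠ a := by simp only [mem_range] at hb; omega
  simp [this]

lemma count_notMem_eq_sub_card {s : Finset ℕ} {a : ℕ} (h : ∀ x ∈ s, x < a) :
    Nat.count (· ∉ s) a = a - #s := by
  rw [Nat.count_eq_card_filter_range, filter_notMem_eq_sdiff, card_sdiff_of_subset, card_range]
  exact fun x hx => mem_range.2 (h x hx)

lemma partitionOfBeta_eq_map (A : Finset ℕ) :
    partitionOfBeta A = (A.sort (· ≥ ·)).map (Nat.count (· ∉ A)) := by
  induction A using Finset.induction_on_max with
  | empty => simp [partitionOfBeta]
  | insert a s h ih =>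
    have ha : a ∉ s := fun ha => (h a ha).false
    rw [partitionOfBeta_insert_of_lt h, sort_insert _ (fun x hx => (h x hx).le) ha,
      List.map_cons, ih, count_notMem_insert_of_le le_rfl, count_notMem_eq_sub_card h]
    refine congrArg _ (List.map_congr_left fun x hx => ?_)
    exact (count_notMem_insert_of_le (h x ((mem_sort _).1 hx)).le).symm

lemma length_filter_partitionOfBeta (A : Finset ℕ) (p : ℕ → Bool) :
    ((partitionOfBeta A).filter p).length = #{a ∈ A | p (Nat.count (· ∉ A) a)} := by
  rw [partitionOfBeta_eq_map, List.filter_map, List.length_map, card_def, filter_val,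
    ← sort_eq A (· ≥ ·), Multiset.filter_coe, Multiset.coe_card]
  simp [Function.comp_def]

def hookRow (x : ℕ) (l : List ℕ) : List ℕ :=
  (List.range x).map fun j => x - j + (l.filter fun p => decide (j < p)).length

lemma hooks_cons (x : ℕ) (l : List ℕ) : hooks (x :: l) = hookRow x l + hooks l := by
  simp only [hooks, List.length_cons, List.range_succ_eq_map, List.flatMap_cons, List.flatMap_map,
    List.getD_cons_zero, List.getD_cons_succ, List.drop_succ_cons, List.drop_zero]
  rfl

lemma Nat.filter_range_eq_image_nth {p : ℕ → Prop} [DecidablePred p]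
    (hp : (Set.ofPred p).Infinite) (a : ℕ) :
    {b ∈ range a | p b} = (range (Nat.count p a)).image (Nat.nth p) := by
  ext b
  simp only [mem_filter, mem_range, mem_image]
  constructor
  · rintro ⟨hba, hb⟩
    exact ⟨Nat.count p b, Nat.count_strict_mono hb hba, Nat.nth_count hb⟩
  · rintro ⟨j, hj, rfl⟩
    exact ⟨Nat.nth_lt_of_lt_count hj, Nat.nth_mem_of_infinite hp j⟩

lemma infinite_setOf_notMem (A : Finset ℕ) : {x | x ∉ A}.Infinite :=
  A.finite_toSet.infinite_compl

def betaHooks (A : Finset ℕ) : Multiset ℕ :=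
  A.val.bind fun a => {b ∈ range a | b ∉ A}.val.map (a - ·)

lemma betaHooks_insert_of_lt {s : Finset ℕ} {a : ℕ} (h : ∀ x ∈ s, x < a) :
    betaHooks (insert a s) = {b ∈ range a | b ∉ s}.val.map (a - ·) + betaHooks s := by
  have ha : a ∉ s := fun ha => (h a ha).false
  have hfilter : ∀ x ≤ a, {b ∈ range x | b ∉ insert a s} = {b ∈ range x | b ∉ s} := by
    intro x hx
    refine filter_congr fun b hb => ?_
    have : b ≠ a := by simp only [mem_range] at hb; omega
    simp [this]
  rw [betaHooks, insert_val_of_notMem ha, Multiset.cons_bind, hfilter a le_rfl, betaHooks]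
  congr 1
  exact Multiset.bind_congr fun x hx => by rw [hfilter x (h x hx).le]

-- The cell of the top row in column `j` corresponds to the `j`-th non-element `b` of `s`,
-- and its hook length is `a - b`.
lemma hookRow_partitionOfBeta {s : Finset ℕ} {a : ℕ} (h : ∀ x ∈ s, x < a) :
    (hookRow (a - #s) (partitionOfBeta s) : Multiset ℕ) =
      {b ∈ range a | b ∉ s}.val.map (a - ·) := by
  have hq := infinite_setOf_notMem s
  rw [hookRow, Nat.filter_range_eq_image_nth hq, image_val_of_injOn (Nat.nth_injective hq).injOn,
    Multiset.map_map, count_notMem_eq_sub_card h, ← Multiset.map_coe, range_val,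
    Multiset.range]
  refine Multiset.map_congr rfl fun j hj => ?_
  set b := Nat.nth (· ∉ s) j
  have hj : j < a - #s := by simpa using hj
  have hba : b < a := by
    rw [← count_notMem_eq_sub_card h] at hj
    exact Nat.nth_lt_of_lt_count hj
  have hbs : b ∉ s := Nat.nth_mem_of_infinite hq j
  have hcount : Nat.count (· ∉ s) b = j := Nat.count_nth_of_infinite hq j
  have habove : ((partitionOfBeta s).filter fun p => decide (j < p)).length = #{x ∈ s | b < x} := by
    rw [length_filter_partitionOfBeta]
    simp only [decide_eq_true_eq, Nat.lt_nth_iff_count_lt hq]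
    rfl
  have hbelow : b = j + #{x ∈ s | x < b} := by
    have hmem : {x ∈ range b | x ∈ s} = {x ∈ s | x < b} := by
      ext x; simp [and_comm]
    rw [← hcount, Nat.count_eq_card_filter_range, ← hmem, add_comm,
      card_filter_add_card_filter_not, card_range]
  have hsplit : #{x ∈ s | b < x} + #{x ∈ s | x < b} = #s := by
    rw [← card_filter_add_card_filter_not (s := s) (b < ·)]
    congr 2
    refine filter_congr fun x hx => ?_
    have : x ≠ b := fun hxb => hbs (hxb ▸ hx)
    omega
  simp only [Function.comp_apply]
  omega

lemma hooks_partitionOfBeta (A : Finset ℕ) : hooks (partitionOfBeta A) = betaHooks A := by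
  induction A using Finset.induction_on_max with
  | empty => simp [partitionOfBeta, hooks, betaHooks]
  | insert a s h ih =>
    rw [partitionOfBeta_insert_of_lt h, hooks_cons, hookRow_partitionOfBeta h, ih,
      betaHooks_insert_of_lt h]

def betaConj (n : ℕ) (A : Finset ℕ) : Finset ℕ := {x ∈ range (n + 1) | n - x ∉ A}

section Conjugate

variable {n : ℕ} {A : Finset ℕ}

lemma sort_betaConj (hnA : n ∈ A) :
    (betaConj n A).sort (· ≥ ·) =
      (List.range (Nat.count (· ∉ A) n)).map fun i => n - Nat.nth (· ∉ A) i := by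
  have hq := infinite_setOf_notMem A
  set L := (List.range (Nat.count (· ∉ A) n)).map fun i => n - Nat.nth (· ∉ A) i
  have hlt : ∀ i < Nat.count (· ∉ A) n, Nat.nth (· ∉ A) i < n := fun i hi =>
    Nat.nth_lt_of_lt_count hi
  have hsorted : L.Pairwise (· > ·) := by
    refine List.pairwise_map.2 (List.pairwise_lt_range.imp_of_mem fun hi hj hij => ?_)
    have := (Nat.nth_strictMono hq) hij
    have := hlt _ (List.mem_range.1 hj)
    omega
  have hset : betaConj n A = L.toFinset := by
    ext x
    simp only [L, betaConj, mem_filter, mem_range, List.mem_toFinset, List.mem_map,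
      List.mem_range]
    constructor
    · rintro ⟨hx, hxA⟩
      have hxn : n - x < n := by
        by_contra hge
        exact hxA (by rwa [show n - x = n by omega])
      refine ⟨Nat.count (· ∉ A) (n - x), Nat.count_strict_mono hxA hxn, ?_⟩
      rw [Nat.nth_count hxA]
      omega
    · rintro ⟨i, hi, rfl⟩
      have := hlt i hi
      refine ⟨by omega, ?_⟩
      rw [show n - (n - Nat.nth (· ∉ A) i) = Nat.nth (· ∉ A) i by omega]
      exact Nat.nth_mem_of_infinite hq i
  rw [hset, List.toFinset_sort _ hsorted.nodup]
  exact hsorted.imp le_of_lt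

lemma count_notMem_betaConj (hA : ∀ a ∈ A, a ≤ n) {b : ℕ} (hb : b ≤ n) :
    Nat.count (· ∉ betaConj n A) (n - b) = #{a ∈ A | b < a} := by
  rw [Nat.count_eq_card_filter_range]
  refine card_nbij' (n - ·) (n - ·) ?_ ?_ ?_ ?_ <;> intro x hx <;>
    simp only [coe_filter, mem_range, betaConj, mem_filter, not_and, not_not,
      Set.mem_ofPred_eq] at hx ⊢
  · exact ⟨hx.2 (by omega), by omega⟩
  · have := hA x hx.1
    refine ⟨by omega, fun _ => by rw [show n - (n - x) = x by omega]; exact hx.1⟩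
  · omega
  · have := hA x hx.1
    omega

lemma conjugatePart_partitionOfBeta (hA : ∀ a ∈ A, a ≤ n) (hnA : n ∈ A) :
    conjugatePart (partitionOfBeta A) = partitionOfBeta (betaConj n A) := by
  have hq := infinite_setOf_notMem A
  have hsort : A.sort (· ≥ ·) = n :: (A.erase n).sort (· ≥ ·) := by
    rw [← sort_insert _ (fun a ha => hA a (mem_of_mem_erase ha)) (notMem_erase n A),
      insert_erase hnA]
  rw [partitionOfBeta_eq_map (betaConj n A), sort_betaConj hnA, List.map_map, conjugatePart,
    partitionOfBeta_eq_map A, hsort, List.map_cons, List.headD_cons, ← List.map_cons, ← hsort,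
    ← partitionOfBeta_eq_map]
  refine List.map_congr_left fun i hi => ?_
  have hb := Nat.nth_lt_of_lt_count (List.mem_range.1 hi)
  rw [Function.comp_apply, count_notMem_betaConj hA hb.le, length_filter_partitionOfBeta]
  simp only [decide_eq_true_eq, Nat.add_one_le_iff, Nat.lt_nth_iff_count_lt hq]

end Conjugate

lemma exists_eq_insert_of_lt {A : Finset ℕ} (hA : A.Nonempty) :
    ∃ a s, (∀ x ∈ s, x < a) ∧ A = insert a s :=
  ⟨A.max' hA, A.erase (A.max' hA), fun _ => lt_max'_of_mem_erase_max' A hA,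
    (insert_erase (max'_mem A hA)).symm⟩

lemma length_partitionOfBeta (A : Finset ℕ) : (partitionOfBeta A).length = #A := by
  simp [partitionOfBeta]

theorem partitionOfBeta_injective : Function.Injective partitionOfBeta := by
  intro A B hAB
  induction A using Finset.induction_on_max generalizing B with
  | empty =>
    have := congrArg List.length hAB
    rw [length_partitionOfBeta, length_partitionOfBeta, card_empty, eq_comm, card_eq_zero] at this
    exact this.symm
  | insert a s h ih =>
    obtain ⟨b, t, h', rfl⟩ := exists_eq_insert_of_lt (B.eq_empty_or_nonempty.resolve_left
      (by rintro rfl; simpa [length_partitionOfBeta] using congrArg List.length hAB))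
    rw [partitionOfBeta_insert_of_lt h, partitionOfBeta_insert_of_lt h'] at hAB
    obtain ⟨hab, hst⟩ := List.cons_eq_cons.1 hAB
    obtain rfl := ih hst
    have := card_le_of_forall_lt h
    have := card_le_of_forall_lt h'
    rw [show a = b by omega]

lemma NSymm.of_forall {n : ℕ} {S : Finset ℕ} (h : ∀ x ∈ S, x ≤ n ∧ n - x ∈ S) : NSymm n S := by
  refine Subset.antisymm (fun y hy => ?_) (fun x hx => mem_image.2 ⟨n - x, (h x hx).2, ?_⟩)
  · obtain ⟨x, hx, rfl⟩ := mem_image.1 hy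
    exact (h x hx).2
  · have := (h x hx).1
    omega

lemma nsymm_sdiff_betaConj {n : ℕ} {A : Finset ℕ} (hA : ∀ a ∈ A, a ≤ n) :
    NSymm n (A \ betaConj n A) ∧ NSymm n (betaConj n A \ A) := by
  constructor <;> refine NSymm.of_forall fun x hx => ?_ <;>
    simp only [betaConj, mem_sdiff, mem_filter, mem_range, not_and, not_not] at hx ⊢
  · have := hA x hx.1
    have hnx := hx.2 (by omega)
    refine ⟨this, hnx, fun _ => ?_⟩
    rw [show n - (n - x) = x by omega]
    exact hx.1
  · refine ⟨by omega, ⟨by omega, ?_⟩, hx.1.2⟩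
    rw [show n - (n - x) = x by omega]
    exact hx.2

noncomputable def genFun (M : Multiset ℕ) : ℤ[T;T⁻¹] := (M.map fun k : ℕ => T (k : ℤ)).sum

lemma genFun_add (M N : Multiset ℕ) : genFun (M + N) = genFun M + genFun N := by
  simp [genFun]

lemma coeff_genFun (M : Multiset ℕ) (k : ℕ) : (genFun M).coeff k = M.count k := by
  induction M using Multiset.induction_on with
  | empty => simp [genFun]
  | cons a M ih =>
    have h : genFun (a ::ₘ M) = T a + genFun M := by simp [genFun]
    rw [h, AddMonoidAlgebra.coeff_add, Finsupp.add_apply, ih, T_apply, Multiset.count_cons]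
    by_cases hk : k = a
    · simp [hk, add_comm]
    · simp [hk, Ne.symm hk]

lemma genFun_map_val (S : Finset ℕ) (f : ℕ → ℕ) :
    genFun (S.val.map f) = ∑ x ∈ S, T (f x : ℤ) := by
  rw [genFun, sum_eq_multiset_sum, Multiset.map_map]
  rfl

lemma genFun_val (S : Finset ℕ) : genFun S.val = ∑ a ∈ S, T (a : ℤ) := by
  simpa using genFun_map_val S id

lemma genFun_injective : Function.Injective genFun := by
  refine fun M N h => Multiset.ext.2 fun k => ?_
  have := congrArg (·.coeff (k : ℤ)) h
  simp only [coeff_genFun] at this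
  exact_mod_cast this

lemma one_sub_T_one_ne_zero : (1 - T 1 : ℤ[T;T⁻¹]) ≠ 0 := by
  intro h
  simpa using congrArg (·.coeff 0) h

lemma one_sub_T_mul_genFun_range (m : ℕ) :
    (1 - T 1) * genFun (range m).val = 1 - T m := by
  have h : genFun (range m).val = ∑ i ∈ range m, (T 1 : ℤ[T;T⁻¹]) ^ i := by
    simp only [genFun_val, T_pow, mul_one]
  rw [h, mul_neg_geom_sum, T_pow, mul_one]

lemma one_sub_T_mul_sum_range_T_sub (a : ℕ) :
    (1 - T 1) * ∑ b ∈ range a, (T ((a : ℤ) - b) : ℤ[T;T⁻¹]) = T 1 - T (a + 1) := by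
  induction a with
  | zero => simp
  | succ a ih =>
    rw [sum_range_succ', mul_add, Nat.cast_zero, sub_zero]
    simp only [Nat.cast_succ, add_sub_add_right_eq_sub]
    have h : (T (a + 1 + 1) : ℤ[T;T⁻¹]) = T 1 * T (a + 1) := by rw [← T_add]; ring_nf
    linear_combination ih + h

lemma T_mul_invert_genFun {n : ℕ} {M : Multiset ℕ} (hM : ∀ a ∈ M, a ≤ n) :
    T n * invert (genFun M) = genFun (M.map (n - ·)) := by
  rw [genFun, genFun, map_multiset_sum, Multiset.map_map, ← Multiset.sum_map_mul_left,
    Multiset.map_map]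
  congr 1
  refine Multiset.map_congr rfl fun a ha => ?_
  simp only [Function.comp_apply, invert_T, ← T_add, Nat.cast_sub (hM a ha), sub_eq_add_neg]

lemma genFun_eq_of_nsymm {n : ℕ} {S : Finset ℕ} (hS : ∀ a ∈ S, a ≤ n) (h : NSymm n S) :
    genFun S.val = T n * invert (genFun S.val) := by
  have hinj : Set.InjOn (n - ·) S := fun x hx y hy hxy => by
    have := hS x hx; have := hS y hy; simp only at hxy; omega
  rw [T_mul_invert_genFun hS, ← image_val_of_injOn hinj]
  exact congrArg (genFun ·.val) h.symm

lemma genFun_hookRow {s : Finset ℕ} {a : ℕ} (h : ∀ x ∈ s, x < a) :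
    genFun ({b ∈ range a | b ∉ s}.val.map (a - ·)) =
      ∑ b ∈ range a, T ((a : ℤ) - b) - T a * invert (genFun s.val) := by
  have hs : s ⊆ range a := fun x hx => mem_range.2 (h x hx)
  rw [T_mul_invert_genFun fun x hx => (h x hx).le, genFun_map_val, genFun_map_val,
    filter_notMem_eq_sdiff, eq_sub_iff_add_eq, sum_sdiff hs]
  refine sum_congr rfl fun b hb => ?_
  rw [Nat.cast_sub (mem_range.1 hb).le]

theorem hook_genFun_identity (S : Finset ℕ) :
    (1 - T 1) * (genFun S.val * invert (genFun S.val) + genFun (betaHooks S) +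
      invert (genFun (betaHooks S))) = invert (genFun S.val) - T 1 * genFun S.val := by
  induction S using Finset.induction_on_max with
  | empty => simp [genFun, betaHooks]
  | insert a s h ih =>
    have ha : a ∉ s := fun ha => (h a ha).false
    set U := ∑ b ∈ range a, (T ((a : ℤ) - b) : ℤ[T;T⁻¹])
    have hU := one_sub_T_mul_sum_range_T_sub a
    have hU' := congrArg invert hU
    simp only [map_mul, map_sub, map_one, invert_T] at hU'
    have hrow := genFun_hookRow h
    have hrow' := congrArg invert hrow
    simp only [map_mul, map_sub, invert_T, involutive_invert _] at hrow'
    have hins : genFun (insert a s).val = T a + genFun s.val := by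
      simp [genFun, insert_val_of_notMem ha]
    rw [betaHooks_insert_of_lt h, genFun_add, map_add, hins, map_add, invert_T, hrow', hrow]
    have h1 : (T a * T (-a) : ℤ[T;T⁻¹]) = 1 := by rw [← T_add]; simp
    have h2 : (T 1 * T (-1) : ℤ[T;T⁻¹]) = 1 := by rw [← T_add]; simp
    have h3 : (T 1 * T a : ℤ[T;T⁻¹]) = T (a + 1) := by rw [← T_add]; ring_nf
    have h4 : (T 1 * T (-(a + 1)) : ℤ[T;T⁻¹]) = T (-a) := by rw [← T_add]; ring_nf
    linear_combination ih + hU - T 1 * hU' + (1 - T 1) * h1 - (invert U + 1) * h2 + h3 + h4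

lemma eq_betaConj_of_map_add_eq_range {n : ℕ} {A B : Finset ℕ} (hA : ∀ a ∈ A, a ≤ n)
    (h : A.val.map (n - ·) + B.val = (range (n + 1)).val) : B = betaConj n A := by
  have hnd : (A.val.map (n - ·) + B.val).Nodup := h ▸ (range (n + 1)).nodup
  have hdisj : ∀ x ∈ A.val.map (n - ·), x ∉ B.val :=
    fun _ => Multiset.disjoint_left.1 (Multiset.nodup_add.1 hnd).2.2
  have hmem : ∀ x, x ∈ A.val.map (n - ·) + B.val ↔ x ≤ n := fun x => by
    rw [h, mem_val, mem_range, Nat.lt_succ_iff]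
  ext x
  simp only [betaConj, mem_filter, mem_range, Nat.lt_succ_iff]
  constructor
  · intro hx
    have hxn := (hmem x).1 (Multiset.mem_add.2 (Or.inr hx))
    exact ⟨hxn, fun hnx => hdisj x (Multiset.mem_map.2 ⟨n - x, hnx, by omega⟩) hx⟩
  · rintro ⟨hxn, hnx⟩
    rcases Multiset.mem_add.1 ((hmem x).2 hxn) with hx | hx
    · obtain ⟨a, ha, rfl⟩ := Multiset.mem_map.1 hx
      have := hA a ha
      exact absurd (by rwa [show n - (n - a) = a by omega]) hnx
    · exact hx

lemma eq_betaConj_of_betaHooks_eq {n : ℕ} {A B : Finset ℕ} (hA : ∀ a ∈ A, a ≤ n)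
    (hB : ∀ b ∈ B, b ≤ n) (hAB : A ≠ B) (hH : betaHooks A = betaHooks B)
    (hsA : NSymm n (A \ B)) (hsB : NSymm n (B \ A)) : B = betaConj n A := by
  have hsym : genFun A.val - genFun B.val =
      T n * (invert (genFun A.val) - invert (genFun B.val)) := by
    have hdiff : genFun A.val - genFun B.val = genFun (A \ B).val - genFun (B \ A).val := by
      rw [genFun_val, genFun_val, genFun_val, genFun_val, ← sum_inter_add_sum_sdiff A B,
        ← sum_inter_add_sum_sdiff B A, inter_comm B A]
      ring
    rw [← map_sub, hdiff, map_sub, mul_sub,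
      ← genFun_eq_of_nsymm (fun a ha => hA a (sdiff_subset ha)) hsA,
      ← genFun_eq_of_nsymm (fun b hb => hB b (sdiff_subset hb)) hsB]
  set χA := genFun A.val
  set χB := genFun B.val
  have hA_id := hook_genFun_identity A
  have hB_id := hook_genFun_identity B
  rw [hH] at hA_id
  have hδ : invert χA - invert χB ≠ 0 := fun h =>
    hAB (val_injective (genFun_injective (invert.injective (sub_eq_zero.1 h))))
  have hTn : (T 1 * T n : ℤ[T;T⁻¹]) = T (n + 1) := by rw [← T_add, add_comm]
  have hmain : (invert χA - invert χB) * ((1 - T 1) * (T n * invert χA + χB)) =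
      (invert χA - invert χB) * ((1 - T 1) * genFun (range (n + 1)).val) := by
    rw [one_sub_T_mul_genFun_range]
    push_cast
    linear_combination (hA_id - hB_id) - ((1 - T 1) * invert χA + T 1) * hsym
      - (invert χA - invert χB) * hTn
  have hsum := mul_left_cancel₀ one_sub_T_one_ne_zero (mul_left_cancel₀ hδ hmain)
  rw [T_mul_invert_genFun hA, ← genFun_add] at hsum
  exact eq_betaConj_of_map_add_eq_range hA (genFun_injective hsum)

theorem stmt_5_general (n : ℕ) (A B : Finset ℕ) (hA : A ⊆ Finset.Icc 1 n) (hB : B ⊆ Finset.Icc 1 n)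
    (hAB : A ≠ B) (hnA : n ∈ A)
    (hH : hooks (partitionOfBeta A) = hooks (partitionOfBeta B)) :
    conjugatePart (partitionOfBeta A) = partitionOfBeta B ↔
      NSymm n (A \ B) ∧ NSymm n (B \ A) := by
  have hA' : ∀ a ∈ A, a ≤ n := fun a ha => (mem_Icc.1 (hA ha)).2
  have hB' : ∀ b ∈ B, b ≤ n := fun b hb => (mem_Icc.1 (hB hb)).2
  rw [conjugatePart_partitionOfBeta hA' hnA]
  constructor
  · intro h
    rw [← partitionOfBeta_injective h]
    exact nsymm_sdiff_betaConj hA'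
  · rintro ⟨hsA, hsB⟩
    rw [hooks_partitionOfBeta, hooks_partitionOfBeta] at hH
    rw [eq_betaConj_of_betaHooks_eq hA' hB' hAB hH hsA hsB]

/-- Main theorem: for distinct `A, B ⊆ {1,…,n}` with `n ∈ A ∩ B` and
`H(λ_A) = H(λ_B)`, the partitions `λ_A` and `λ_B` are conjugate to each other iff
`A \ B` and `B \ A` are `n`-symmetric. -/
theorem stmt_5 (n : ℕ) (A B : Finset ℕ) (hA : A ⊆ Finset.Icc 1 n) (hB : B ⊆ Finset.Icc 1 n)
    (hAB : A ≠ B) (hnA : n ∈ A) (hnB : n ∈ B)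
    (hH : hooks (partitionOfBeta A) = hooks (partitionOfBeta B)) :
    conjugatePart (partitionOfBeta A) = partitionOfBeta B ↔
      NSymm n (A \ B) ∧ NSymm n (B \ A) :=
  stmt_5_general n A B hA hB hAB hnA hH
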